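/- Let R be a commutative ring and n ≥ 2. The following are equivalent: (1) the matrix ring Mₙ(R) is strongly clean, i.e., every element of Mₙ(R) is strongly clean; (2) every monic polynomial h ∈ R[t] of degree n has a gSRC-factorization. -/

import Mathlib

/-- An element of a ring is *strongly clean* if it is the sum of an idempotent and a unit
that commute with each other. -/
def IsStronglyClean {S : Type*} [Ring S] (a : S) : Prop :=
  ∃ e u : S, IsIdempotentElem e ∧ IsUnit u ∧ a = e + u ∧ e * u = u * e

/-- An SR-factorization of a monic polynomial `f` is a factorization `f = f₀ * f₁` into monic
polynomials with `f₀(0)` and `f₁(1)` units. -/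
def HasSRFactorization {R : Type*} [CommRing R] (f : Polynomial R) : Prop :=
  ∃ f₀ f₁ : Polynomial R, f₀.Monic ∧ f₁.Monic ∧ f = f₀ * f₁ ∧
    IsUnit (f₀.eval 0) ∧ IsUnit (f₁.eval 1)

/-- An SRC-factorization is an SR-factorization `f = f₀ * f₁` in which moreover the ideal
`(f₀, f₁)` is all of `R[t]`, i.e. `f₀ * u + f₁ * v = 1` for some `u, v`. -/
def HasSRCFactorization {R : Type*} [CommRing R] (f : Polynomial R) : Prop :=
  ∃ f₀ f₁ : Polynomial R, f₀.Monic ∧ f₁.Monic ∧ f = f₀ * f₁ ∧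
    IsUnit (f₀.eval 0) ∧ IsUnit (f₁.eval 1) ∧ ∃ u v : Polynomial R, f₀ * u + f₁ * v = 1

/-- A complete orthogonal set of idempotents: finitely many idempotents, pairwise orthogonal,
summing to `1`. -/
def IsCompleteOrthogonalIdempotents {R : Type*} [CommRing R] {k : ℕ} (e : Fin k → R) : Prop :=
  (∀ i, IsIdempotentElem (e i)) ∧ (∀ i j, i ≠ j → e i * e j = 0) ∧ ∑ i, e i = 1

/-- A monic `h ∈ R[t]` has a gSRC-factorization if there is a complete orthogonal set of
idempotents `e₁, …, e_k` such that the image of `h` in `(R/(1-eᵢ))[t]` has an SRC-factorization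
for each `i`. -/
def HasGSRCFactorization {R : Type*} [CommRing R] (h : Polynomial R) : Prop :=
  ∃ (k : ℕ) (e : Fin k → R), IsCompleteOrthogonalIdempotents e ∧
    ∀ i, HasSRCFactorization (h.map (Ideal.Quotient.mk (Ideal.span {1 - e i})))

/-!
Forward direction: let `C` be the companion matrix of `h` and `C = E + U` strongly clean. The
coefficients of `det (t E + 1 - E)` are a complete orthogonal set of idempotents `dᵣ`; modulo
`1 - dᵣ` the idempotent `E` has rank `r`. The characteristic polynomials of `C` on `im (1 - E)` and
on `im E`, `f₀ = det ((t - C)(1 - E) + E)` and `f₁ = det ((t - C) E + 1 - E)`, multiply to `h` and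
become monic modulo each `1 - dᵣ`. Since `C` acts as the unit `U` on `im (1 - E)` and `C - 1` acts
as `U` on `im E`, `f₀(0)` and `f₁(1)` are units, and Cayley–Hamilton gives `f₁(C) E = 0` and
`f₀(C) (1 - E) = 0`. As `E = ε(C)` for a polynomial `ε`, this means `f₀ ∣ ε` and `f₁ ∣ 1 - ε`.

Backward direction: if `f₀ f₁` is an SRC-factorization of the characteristic polynomial of `A` with
`f₀ u + f₁ v = 1`, then `(f₀ u)(A)` is an idempotent and `A - (f₀ u)(A)` a commuting unit. These
decompositions over the rings `R/(1 - eᵢ)` glue along `R ≅ ∏ R/(1 - eᵢ)`.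
-/

open Polynomial Matrix

section Peirce

variable {S : Type*} [Ring S] {e : S}

theorem IsIdempotentElem.peirce_mul_peirce (he : IsIdempotentElem e) (a b : S) {c d : S}
    (hc : Commute c e) (hd : Commute d e) :
    (a * e + b * (1 - e)) * (c * e + d * (1 - e)) = a * c * e + b * d * (1 - e) := by
  have swap : ∀ {x f : S} (y g : S), Commute x f → y * f * (x * g) = y * x * (f * g) :=
    fun {x f} y g hx => by rw [mul_assoc, ← mul_assoc f, ← hx.eq]; simp only [mul_assoc]
  rw [add_mul, mul_add, mul_add, swap _ _ hc, swap _ _ hd,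
    swap _ _ ((Commute.one_right c).sub_right hc), swap _ _ ((Commute.one_right d).sub_right hd),
    he.eq, he.one_sub.eq, he.mul_one_sub_self, he.one_sub_mul_self, mul_zero, mul_zero, add_zero,
    zero_add]

theorem IsIdempotentElem.isUnit_one_sub_add_mul (he : IsIdempotentElem e) {u : S}
    (hu : IsUnit u) (hue : Commute u e) : IsUnit (1 - e + u * e) := by
  obtain ⟨u, rfl⟩ := hu
  have key : ∀ v w : S, Commute v e → Commute w e →
      (1 - e + v * e) * (1 - e + w * e) = 1 - e + v * w * e := fun v w hv hw => by
    simpa [add_comm, one_mul] using he.peirce_mul_peirce v 1 hw (Commute.one_left e)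
  refine ⟨⟨_, 1 - e + ↑u⁻¹ * e, ?_, ?_⟩, rfl⟩
  · rw [key _ _ hue hue.units_inv_left, u.mul_inv, one_mul, sub_add_cancel]
  · rw [key _ _ hue.units_inv_left hue, u.inv_mul, one_mul, sub_add_cancel]

end Peirce

theorem Polynomial.coeff_coeff_aeval_C_X_mul_X {R : Type*} [CommRing R] (d : R[X]) (r s : ℕ) :
    ((aeval (C X * X : R[X][X]) d).coeff s).coeff r = if r = s then d.coeff r else 0 := by
  have hterm : ∀ i, d.coeff i • (C X * X : R[X][X]) ^ i = C (monomial i (d.coeff i)) * X ^ i := by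
    intro i
    rw [← C_mul_X_pow_eq_monomial]
    simp only [Algebra.smul_def, mul_pow, map_mul, map_pow, Polynomial.algebraMap_apply,
      algebraMap_eq]
    ring
  rw [aeval_eq_sum_range, Finset.sum_congr rfl fun i _ => hterm i, finsetSum_coeff]
  simp only [coeff_C_mul_X_pow, apply_ite (fun p : R[X] => p.coeff r), coeff_zero,
    Finset.sum_ite_eq, coeff_monomial, Finset.mem_range]
  split_ifs <;> grind [coeff_eq_zero_of_natDegree_lt]

theorem Polynomial.aeval_mul_of_mul_eq {R S : Type*} [CommRing R] [Ring S] [Algebra R S]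
    {x y b : S} (hxb : Commute x b) (h : y * b = x * b) (p : R[X]) :
    aeval y p * b = aeval x p * b := by
  have hpow : ∀ k : ℕ, y ^ k * b = x ^ k * b := by
    intro k
    induction k with
    | zero => simp
    | succ k ih => rw [pow_succ, mul_assoc, h, hxb.eq, ← mul_assoc, ih, mul_assoc, ← hxb.eq,
        ← mul_assoc, ← pow_succ]
  simp only [aeval_eq_sum_range, Finset.sum_mul, smul_mul_assoc, hpow]

lemma OrthogonalIdempotents.quotient_mk_span_one_sub {R I : Type*} [CommRing R] [DecidableEq I]
    {e : I → R} (he : OrthogonalIdempotents e) (i j : I) :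
    Ideal.Quotient.mk (Ideal.span {1 - e j}) (e i) = if i = j then 1 else 0 := by
  have hj : Ideal.Quotient.mk (Ideal.span {1 - e j}) (1 - e j) = 0 :=
    Ideal.Quotient.eq_zero_iff_mem.mpr (Ideal.subset_span rfl)
  split_ifs with hij
  · subst hij
    rwa [map_sub, map_one, sub_eq_zero, eq_comm] at hj
  · rw [← sub_zero (e i), ← he.ortho hij, ← mul_one_sub, map_mul, hj, mul_zero]

section RankPoly

variable {R : Type*} [CommRing R] {ι : Type*} [Fintype ι] [DecidableEq ι] {E : Matrix ι ι R}

/-- For idempotent `E`, the coefficient of `X ^ r` is the idempotent of `R` over which `E` has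
rank `r`. -/
noncomputable def rankPoly (E : Matrix ι ι R) : R[X] :=
  (scalar ι X * C.mapMatrix E + (1 - C.mapMatrix E)).det

lemma natDegree_rankPoly_le (E : Matrix ι ι R) : (rankPoly E).natDegree ≤ Fintype.card ι := by
  have : 1 - C.mapMatrix E = (1 - E).map C := by rw [← RingHom.mapMatrix_apply, map_sub, map_one]
  rw [rankPoly, scalar_apply, ← smul_eq_diagonal_mul, this, RingHom.mapMatrix_apply]
  exact natDegree_det_X_add_C_le _ _

lemma aeval_rankPoly {A : Type*} [CommRing A] [Algebra R A] (E : Matrix ι ι R) (a : A) :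
    aeval a (rankPoly E) =
      (scalar ι a * (algebraMap R A).mapMatrix E + (1 - (algebraMap R A).mapMatrix E)).det := by
  have hX : (aeval a).mapMatrix (scalar ι (X : R[X])) = scalar ι a := by
    ext i j : 1
    by_cases hij : i = j <;> simp [hij]
  have hE : (aeval a).mapMatrix (C.mapMatrix E) = (algebraMap R A).mapMatrix E := by
    ext i j : 1; simp
  rw [rankPoly, AlgHom.map_det, map_add, map_mul, map_sub, map_one, hX, hE]

lemma coeff_rankPoly_mul_coeff (hE : IsIdempotentElem E) (r s : ℕ) :
    (rankPoly E).coeff r * (rankPoly E).coeff s = if r = s then (rankPoly E).coeff r else 0 := by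
  -- `d(XY) = d(X) d(Y)` in `R[X][Y]`; compare the coefficients of `X ^ r * Y ^ s`.
  have hmul : aeval (C X * X : R[X][X]) (rankPoly E) =
      aeval (C X : R[X][X]) (rankPoly E) * aeval (X : R[X][X]) (rankPoly E) := by
    have hE' := hE.map (algebraMap R R[X][X]).mapMatrix
    have := hE'.peirce_mul_peirce (scalar ι (C X)) 1 (c := scalar ι X) (d := 1)
      (scalar_commute X (Commute.all X) _) (Commute.one_left _)
    simp only [mul_one, one_mul, ← map_mul] at this
    rw [aeval_rankPoly, aeval_rankPoly, aeval_rankPoly, ← det_mul, this]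
  have key := congr((($hmul).coeff s).coeff r)
  rw [coeff_coeff_aeval_C_X_mul_X, ← algebraMap_eq (R := R[X]), aeval_algebraMap_apply,
    aeval_X_left_apply, aeval_X_left_eq_map] at key
  simpa only [algebraMap_eq, coeff_C_mul, coeff_map, coeff_mul_C, eq_comm] using key

lemma eval_one_rankPoly (E : Matrix ι ι R) : (rankPoly E).eval 1 = 1 := by
  simpa using aeval_rankPoly E (1 : R)

lemma completeOrthogonalIdempotents_coeff_rankPoly (hE : IsIdempotentElem E) :
    CompleteOrthogonalIdempotents fun r : Fin (Fintype.card ι + 1) => (rankPoly E).coeff r where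
  idem r := (coeff_rankPoly_mul_coeff hE r r).trans (if_pos rfl)
  ortho r s hrs := by simpa [Fin.val_ne_of_ne hrs] using coeff_rankPoly_mul_coeff hE r s
  complete := by
    rw [Fin.sum_univ_eq_sum_range (fun r => (rankPoly E).coeff r), ← eval_one_rankPoly E,
      eval_eq_sum_range' (Nat.lt_succ_of_le (natDegree_rankPoly_le E))]
    simp

lemma aeval_mul_rankPoly (hE : IsIdempotentElem E) {S : Type*} [Ring S] [Algebra R S] {v w : S}
    (hvw : Commute v w) :
    aeval (v * w) (rankPoly E) = aeval v (rankPoly E) * aeval w (rankPoly E) := by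
  have hN := Nat.lt_succ_of_le (natDegree_rankPoly_le E)
  simp only [aeval_eq_sum_range' hN, Finset.sum_mul_sum, smul_mul_smul_comm,
    coeff_rankPoly_mul_coeff hE, ite_smul, zero_smul, Finset.sum_ite_eq, hvw.mul_pow]
  exact Finset.sum_congr rfl fun r hr => (if_pos hr).symm

lemma isUnit_aeval_rankPoly (hE : IsIdempotentElem E) {S : Type*} [Ring S] [Algebra R S] {u : S}
    (hu : IsUnit u) : IsUnit (aeval u (rankPoly E)) := by
  obtain ⟨u, rfl⟩ := hu
  have aeval_one : aeval (1 : S) (rankPoly E) = 1 := by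
    rw [← map_one (algebraMap R S), aeval_algebraMap_apply_eq_algebraMap_eval, eval_one_rankPoly,
      map_one]
  refine ⟨⟨_, aeval (↑u⁻¹ : S) (rankPoly E), ?_, ?_⟩, rfl⟩
  · rw [← aeval_mul_rankPoly hE (Commute.refl (u : S)).units_inv_right, u.mul_inv, aeval_one]
  · rw [← aeval_mul_rankPoly hE (Commute.refl (u : S)).units_inv_left, u.inv_mul, aeval_one]

lemma rankPoly_one_sub :
    rankPoly (1 - E) = (scalar ι X * (1 - C.mapMatrix E) + C.mapMatrix E).det := by
  rw [rankPoly, map_sub, map_one, sub_sub_cancel]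

lemma rankPoly_mul_rankPoly_one_sub (hE : IsIdempotentElem E) :
    rankPoly E * rankPoly (1 - E) = X ^ Fintype.card ι := by
  have := (hE.map C.mapMatrix).peirce_mul_peirce (scalar ι X) 1 (Commute.one_left _)
    (scalar_commute X (Commute.all X) _)
  rw [one_mul, one_mul, mul_one, one_mul, ← mul_add, add_sub_cancel, mul_one] at this
  rw [rankPoly, rankPoly_one_sub, ← det_mul, add_comm (_ * (1 - _)), this, scalar_apply,
    det_diagonal, Finset.prod_const, Finset.card_univ]

lemma map_rankPoly_quotient (hE : IsIdempotentElem E) (r : Fin (Fintype.card ι + 1)) :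
    (rankPoly E).map (Ideal.Quotient.mk (Ideal.span {1 - (rankPoly E).coeff r})) = X ^ (r : ℕ) := by
  ext k : 1
  rw [coeff_map, coeff_X_pow]
  by_cases hk : k < Fintype.card ι + 1
  · have := (completeOrthogonalIdempotents_coeff_rankPoly hE).toOrthogonalIdempotents
    simpa [Fin.ext_iff] using this.quotient_mk_span_one_sub ⟨k, hk⟩ r
  · rw [coeff_eq_zero_of_natDegree_lt (n := k) ((natDegree_rankPoly_le E).trans_lt (by omega)),
      map_zero, if_neg (by omega)]

lemma map_rankPoly_one_sub_quotient (hE : IsIdempotentElem E) (r : Fin (Fintype.card ι + 1)) :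
    (rankPoly (1 - E)).map (Ideal.Quotient.mk (Ideal.span {1 - (rankPoly E).coeff r})) =
      X ^ (Fintype.card ι - r) := by
  refine (monic_X_pow (r : ℕ)).isRegular.left ?_
  dsimp only
  rw [← pow_add, Nat.add_sub_cancel' (Fin.is_le r), ← map_rankPoly_quotient hE r,
    ← Polynomial.map_mul, rankPoly_mul_rankPoly_one_sub hE, Polynomial.map_pow, map_X]

end RankPoly

section CharpolyOn

variable {R : Type*} [CommRing R] {ι : Type*} [Fintype ι] [DecidableEq ι] {M E : Matrix ι ι R}

/-- For an idempotent `E` commuting with `M`, the characteristic polynomial of `M` restricted to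
the image of `E`. -/
noncomputable def charpolyOn (M E : Matrix ι ι R) : R[X] :=
  (charmatrix M * C.mapMatrix E + (1 - C.mapMatrix E)).det

lemma charpolyOn_sub_scalar (c : R) :
    charpolyOn (M - scalar ι c) E = (charpolyOn M E).comp (X + C c) := by
  have hcm : (aeval (X + C c)).mapMatrix (charmatrix M) = charmatrix (M - scalar ι c) := by
    ext i j : 1
    by_cases hij : i = j
    · subst hij; simp; ring
    · simp [hij]
  have hC : (aeval (X + C c)).mapMatrix (C.mapMatrix E) = C.mapMatrix E := by
    ext i j : 1; simp
  rw [comp_eq_aeval, charpolyOn, charpolyOn, AlgHom.map_det, map_add, map_mul, map_sub, map_one,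
    hcm, hC]

lemma charpolyOn_mul_rankPoly_one_sub (hE : IsIdempotentElem E) (M : Matrix ι ι R) :
    charpolyOn M E * rankPoly (1 - E) = (M * E).charpoly := by
  have hE' := hE.map C.mapMatrix
  have := hE'.peirce_mul_peirce (charmatrix M) 1 (Commute.one_left _)
    (scalar_commute X (Commute.all X) _)
  rw [one_mul, one_mul, mul_one, one_mul, add_comm (C.mapMatrix E)] at this
  rw [charpolyOn, rankPoly_one_sub, ← det_mul, this, charpoly, charmatrix, charmatrix, map_mul]
  noncomm_ring

lemma charpolyOn_one_sub_mul_charpolyOn (hE : IsIdempotentElem E) (hME : Commute M E) :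
    charpolyOn M (1 - E) * charpolyOn M E = M.charpoly := by
  have hE' := hE.map C.mapMatrix
  have hcm : Commute (charmatrix M) (C.mapMatrix E) :=
    (scalar_commute X (Commute.all X) _).sub_left (hME.map C.mapMatrix)
  have := hE'.peirce_mul_peirce 1 (charmatrix M) hcm (Commute.one_left _)
  simp only [one_mul, mul_one] at this
  rw [← mul_add, add_sub_cancel, mul_one] at this
  rw [charpolyOn, charpolyOn, ← det_mul, map_sub, map_one, sub_sub_cancel, add_comm, this, charpoly]

lemma isUnit_eval_charpolyOn (hE : IsIdempotentElem E) {u : Matrix ι ι R} (hu : IsUnit u)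
    (huE : Commute u E) {c : R} (h : (M - scalar ι c) * E = u * E) :
    IsUnit ((charpolyOn M E).eval c) := by
  have hev : (evalRingHom c).mapMatrix (charmatrix M) = -(M - scalar ι c) := by
    ext i j : 1
    by_cases hij : i = j
    · subst hij; simp
    · simp [hij]
  have hEc : (evalRingHom c).mapMatrix (C.mapMatrix E) = E := by ext i j : 1; simp
  rw [← coe_evalRingHom, charpolyOn, RingHom.map_det, map_add, map_mul, map_sub, map_one, hev,
    hEc, neg_mul, h, ← neg_mul, add_comm]
  exact (isUnit_iff_isUnit_det _).mp (hE.isUnit_one_sub_add_mul hu.neg huE.neg_left)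

lemma aeval_charpolyOn_mul_eq_zero (hE : IsIdempotentElem E) (hME : Commute M E)
    {u : Matrix ι ι R} (hu : IsUnit u) (huE : Commute u E) {c : R}
    (h : (M - scalar ι c) * E = u * E) : aeval M (charpolyOn M E) * E = 0 := by
  -- Cayley–Hamilton for `y = (M - c) E`, whose charpoly is `charpolyOn M E` shifted by `c` times
  -- `q = rankPoly (1 - E)`; on `im E`, `q(y)` acts as the unit `q(u)`.
  set y := (M - scalar ι c) * E
  set q := rankPoly (1 - E)
  have hyE : y * E = u * E := by rw [mul_assoc, hE.eq]; exact h
  have hshift : (y + scalar ι c) * E = M * E := by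
    rw [add_mul, mul_assoc, hE.eq, sub_mul, sub_add_cancel]
  have hCH : aeval (y + scalar ι c) (charpolyOn M E) * aeval y q = 0 := by
    have := aeval_self_charpoly y
    rwa [← charpolyOn_mul_rankPoly_one_sub hE, charpolyOn_sub_scalar, map_mul, aeval_comp,
      map_add, aeval_X, aeval_C, algebraMap_eq_diagonal] at this
  have hqE : Commute (aeval u q) E := by
    rw [aeval_eq_sum_range]
    exact Commute.sum_left _ _ _ fun i _ => (huE.pow_left i).smul_left _
  rw [← (isUnit_aeval_rankPoly hE.one_sub hu).mul_left_eq_zero, ← aeval_mul_of_mul_eq hME hshift,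
    mul_assoc, ← hqE.eq, ← aeval_mul_of_mul_eq huE hyE, ← mul_assoc, hCH, zero_mul]

lemma monic_map_charpolyOn (hE : IsIdempotentElem E) (M : Matrix ι ι R) {T : Type*} [CommRing T]
    {π : R →+* T} {m : ℕ} (hπ : (rankPoly (1 - E)).map π = X ^ m) :
    ((charpolyOn M E).map π).Monic := by
  refine (monic_X_pow m).of_mul_monic_right ?_
  rw [← hπ, ← Polynomial.map_mul, charpolyOn_mul_rankPoly_one_sub hE]
  exact (charpoly_monic _).map π

lemma isLeftRegular_charpolyOn (hE : IsIdempotentElem E) (M : Matrix ι ι R) :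
    IsLeftRegular (charpolyOn M E) := by
  have := (charpoly_monic (M * E)).isRegular.left
  rw [← charpolyOn_mul_rankPoly_one_sub hE, mul_comm] at this
  exact this.of_mul

end CharpolyOn

section Companion

variable {R : Type*} [CommRing R] {h : R[X]}

noncomputable def companionMatrix (hm : h.Monic) : Matrix (Fin h.natDegree) (Fin h.natDegree) R :=
  Algebra.leftMulMatrix (AdjoinRoot.powerBasisAux' hm) (AdjoinRoot.root h)

lemma aeval_companionMatrix (hm : h.Monic) (p : R[X]) :
    aeval (companionMatrix hm) p =
      Algebra.leftMulMatrix (AdjoinRoot.powerBasisAux' hm) (AdjoinRoot.mk h p) := by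
  rw [companionMatrix, aeval_algHom_apply, AdjoinRoot.aeval_eq]

lemma exists_eq_aeval_companionMatrix_of_commute (hm : h.Monic)
    {B : Matrix (Fin h.natDegree) (Fin h.natDegree) R} (hB : Commute B (companionMatrix hm)) :
    ∃ p : R[X], B = aeval (companionMatrix hm) p := by
  let b := AdjoinRoot.powerBasisAux' hm
  let β := Matrix.toLin b b B
  have hβ : Commute β (Algebra.lmul R (AdjoinRoot h) (AdjoinRoot.root h)) := by
    have := congrArg (Matrix.toLin b b) hB.eq
    rwa [Matrix.toLin_mul b b b, Matrix.toLin_mul b b b, companionMatrix,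
      Algebra.leftMulMatrix_apply, Matrix.toLin_toMatrix] at this
  have hle : Algebra.adjoin R {AdjoinRoot.root h} ≤
      (Subalgebra.centralizer R {β}).comap (Algebra.lmul R (AdjoinRoot h)) :=
    Algebra.adjoin_le <| Set.singleton_subset_iff.mpr fun _ hg => hg ▸ hβ.eq
  rw [AdjoinRoot.adjoinRoot_eq_top, top_le_iff] at hle
  have hβmul : ∀ y, β y = y * β 1 := fun y => by
    have hy : y ∈ (⊤ : Subalgebra R (AdjoinRoot h)) := trivial
    rw [← hle] at hy
    simpa using congr($(hy β rfl) 1)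
  obtain ⟨p, hp⟩ := AdjoinRoot.mk_surjective (β 1)
  refine ⟨p, ?_⟩
  rw [aeval_companionMatrix, hp, Algebra.leftMulMatrix_apply, ← Matrix.toLin_symm,
    LinearEquiv.eq_symm_apply]
  ext y
  simpa [mul_comm] using hβmul y

lemma aeval_companionMatrix_eq_zero_iff (hm : h.Monic) (p : R[X]) :
    aeval (companionMatrix hm) p = 0 ↔ h ∣ p := by
  rw [aeval_companionMatrix, map_eq_zero_iff _ (Algebra.leftMulMatrix_injective _),
    AdjoinRoot.mk_eq_zero]

lemma charpoly_companionMatrix (hm : h.Monic) : (companionMatrix hm).charpoly = h := by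
  nontriviality R
  refine eq_of_monic_of_dvd_of_natDegree_le hm (charpoly_monic _) ?_ ?_
  · rw [← aeval_companionMatrix_eq_zero_iff hm]
    exact aeval_self_charpoly _
  · rw [charpoly_natDegree_eq_dim, Fintype.card_fin]

lemma isCoprime_of_aeval_companionMatrix_mul_eq_zero (hm : h.Monic)
    {E : Matrix (Fin h.natDegree) (Fin h.natDegree) R} (hE : Commute E (companionMatrix hm))
    {f₀ f₁ : R[X]} (hf : f₀ * f₁ = h) (hf₀ : IsLeftRegular f₀) (hf₁ : IsLeftRegular f₁)
    (h₀ : aeval (companionMatrix hm) f₀ * (1 - E) = 0)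
    (h₁ : aeval (companionMatrix hm) f₁ * E = 0) : IsCoprime f₀ f₁ := by
  obtain ⟨ε, rfl⟩ := exists_eq_aeval_companionMatrix_of_commute hm hE
  obtain ⟨a, ha⟩ : h ∣ f₁ * ε := by
    rwa [← aeval_companionMatrix_eq_zero_iff hm, map_mul]
  obtain ⟨b, hb⟩ : h ∣ f₀ * (1 - ε) := by
    rwa [← aeval_companionMatrix_eq_zero_iff hm, map_mul, map_sub, map_one]
  have hε : ε = f₀ * a := hf₁ (show f₁ * ε = f₁ * (f₀ * a) by rw [ha, ← hf]; ring)
  have hε' : 1 - ε = f₁ * b := hf₀ (show f₀ * (1 - ε) = f₀ * (f₁ * b) by rw [hb, ← hf]; ring)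
  exact ⟨a, b, by linear_combination -hε - hε'⟩

end Companion

lemma hasSRCFactorization_map {R T : Type*} [CommRing R] [CommRing T] (π : R →+* T)
    {h f₀ f₁ : R[X]} (hf : f₀ * f₁ = h) (hf₀ : (f₀.map π).Monic) (hf₁ : (f₁.map π).Monic)
    (h₀ : IsUnit (f₀.eval 0)) (h₁ : IsUnit (f₁.eval 1)) (hcop : IsCoprime f₀ f₁) :
    HasSRCFactorization (h.map π) := by
  obtain ⟨a, b, hab⟩ := hcop
  refine ⟨_, _, hf₀, hf₁, hf ▸ Polynomial.map_mul π, ?_, ?_, a.map π, b.map π, ?_⟩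
  · rw [eval_zero_map]; exact h₀.map π
  · rw [eval_one_map]; exact h₁.map π
  · rw [← Polynomial.map_mul, ← Polynomial.map_mul, ← Polynomial.map_add, mul_comm, mul_comm f₁,
      hab, Polynomial.map_one]

lemma isCompleteOrthogonalIdempotents_iff {R : Type*} [CommRing R] {k : ℕ} {e : Fin k → R} :
    IsCompleteOrthogonalIdempotents e ↔ CompleteOrthogonalIdempotents e := by
  rw [IsCompleteOrthogonalIdempotents, completeOrthogonalIdempotents_iff,
    orthogonalIdempotents_iff, Pairwise, and_assoc]

theorem Polynomial.Monic.hasGSRCFactorization {R : Type*} [CommRing R] {h : R[X]} (hm : h.Monic)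
    (hC : IsStronglyClean (companionMatrix hm)) : HasGSRCFactorization h := by
  obtain ⟨E, U, hE, hU, hCEU, hEU⟩ := hC
  have hUE : Commute U E := hEU.symm
  have hCE : Commute (companionMatrix hm) E := hCEU ▸ (Commute.refl E).add_left hUE
  have h₀ : (companionMatrix hm - scalar _ 0) * (1 - E) = U * (1 - E) := by
    rw [map_zero, sub_zero, hCEU, add_mul, hE.mul_one_sub_self, zero_add]
  have h₁ : (companionMatrix hm - scalar _ 1) * E = U * E := by
    rw [map_one, hCEU, add_sub_right_comm, add_mul, sub_mul, one_mul, hE.eq, sub_self, zero_add]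
  have hCE' : Commute (companionMatrix hm) (1 - E) := (Commute.one_right _).sub_right hCE
  have hUE' : Commute U (1 - E) := (Commute.one_right _).sub_right hUE
  have hfac := (charpolyOn_one_sub_mul_charpolyOn hE hCE).trans (charpoly_companionMatrix hm)
  have hcop := isCoprime_of_aeval_companionMatrix_mul_eq_zero hm hCE.symm hfac
    (isLeftRegular_charpolyOn hE.one_sub _) (isLeftRegular_charpolyOn hE _)
    (aeval_charpolyOn_mul_eq_zero hE.one_sub hCE' hU hUE' h₀)
    (aeval_charpolyOn_mul_eq_zero hE hCE hU hUE h₁)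
  refine ⟨_, _, isCompleteOrthogonalIdempotents_iff.mpr
    (completeOrthogonalIdempotents_coeff_rankPoly hE), fun r => ?_⟩
  refine hasSRCFactorization_map _ hfac ?_ ?_ (isUnit_eval_charpolyOn hE.one_sub hU hUE' h₀)
    (isUnit_eval_charpolyOn hE hU hUE h₁) hcop
  · exact monic_map_charpolyOn hE.one_sub _ (by rw [sub_sub_cancel, map_rankPoly_quotient hE r])
  · exact monic_map_charpolyOn hE _ (map_rankPoly_one_sub_quotient hE r)

section StronglyClean

variable {S : Type*} [Ring S]

lemma IsStronglyClean.map {S' F : Type*} [Ring S'] [FunLike F S S'] [RingHomClass F S S'] (f : F)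
    {a : S} (ha : IsStronglyClean a) : IsStronglyClean (f a) := by
  obtain ⟨e, u, he, hu, rfl, heu⟩ := ha
  exact ⟨f e, f u, he.map f, hu.map f, map_add f e u, by rw [← map_mul, heu, map_mul]⟩

lemma IsStronglyClean.pi {I : Type*} {T : I → Type*} [∀ i, Ring (T i)] {a : ∀ i, T i}
    (ha : ∀ i, IsStronglyClean (a i)) : IsStronglyClean a := by
  choose e u he hu hae heu using ha
  exact ⟨e, u, funext he, Pi.isUnit_iff.mpr hu, funext hae, funext heu⟩

theorem isStronglyClean_of_aeval_eq_zero {R : Type*} [CommRing R] [Algebra R S] {a : S}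
    {f : R[X]} (hf : aeval a f = 0) (hsrc : HasSRCFactorization f) : IsStronglyClean a := by
  obtain ⟨f₀, f₁, -, -, rfl, h₀, h₁, u, v, huv⟩ := hsrc
  obtain ⟨g₀, hg₀⟩ : X ∣ f₀ - C (f₀.eval 0) := by
    rw [X_dvd_iff, coeff_sub, coeff_C_zero, coeff_zero_eq_eval_zero, sub_self]
  obtain ⟨g₁, hg₁⟩ : X - C 1 ∣ f₁ - C (f₁.eval 1) := by
    rw [dvd_iff_isRoot]; simp
  rw [map_one] at hg₁
  obtain ⟨i₀, hi₀⟩ := h₀.exists_right_inv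
  obtain ⟨i₁, hi₁⟩ := h₁.exists_right_inv
  replace hi₀ : C (f₀.eval 0) * C i₀ = 1 := by rw [← C_mul, hi₀, C_1]
  replace hi₁ : C (f₁.eval 1) * C i₁ = 1 := by rw [← C_mul, hi₁, C_1]
  have hzero : ∀ q, aeval a (f₀ * f₁ * q) = 0 := fun q => by rw [map_mul, hf, zero_mul]
  -- `X - p` acts as `X` where `f₀ = 0` and as `X - 1` where `f₁ = 0`; `g₀`, `g₁` invert these.
  set p := f₀ * u
  set w := -(C i₁ * g₁ * p) - C i₀ * g₀ * (f₁ * v)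
  have hidem : p * p = p + f₀ * f₁ * (-(u * v)) := by linear_combination p * huv
  have hinv : (X - p) * w =
      1 + f₀ * f₁ * (-(C i₁ * u) - C i₀ * v + (C i₀ * g₀ - C i₁ * g₁) * u * v) := by
    linear_combination (1 + C i₁ * g₁ * p) * huv + p * hi₁ + (f₁ * v) * hi₀ + C i₁ * p * hg₁ +
      C i₀ * (f₁ * v) * hg₀
  have hunit : aeval a (X - p) * aeval a w = 1 := by
    rw [← map_mul, hinv, map_add, hzero, add_zero, map_one]
  refine ⟨aeval a p, aeval a (X - p), ?_, ?_, ?_, ?_⟩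
  · rw [IsIdempotentElem, ← map_mul, hidem, map_add, hzero, add_zero]
  · refine ⟨⟨_, aeval a w, hunit, ?_⟩, rfl⟩
    rwa [← map_mul, mul_comm, map_mul]
  · rw [map_sub, aeval_X, add_sub_cancel]
  · rw [← map_mul, ← map_mul, mul_comm]

end StronglyClean

section Gluing

variable {R : Type*} [CommRing R] {ι : Type*} [Fintype ι] [DecidableEq ι]
  {I : Type*} [Fintype I] {e : I → R}

lemma CompleteOrthogonalIdempotents.bijective_pi_mapMatrix (he : CompleteOrthogonalIdempotents e) :
    Function.Bijective (RingHom.pi fun i => (Ideal.Quotient.mk (Ideal.span {1 - e i})).mapMatrix :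
      Matrix ι ι R →+* ∀ i, Matrix ι ι (R ⧸ Ideal.span {1 - e i})) := by
  obtain ⟨hinj, hsurj⟩ := he.bijective_pi
  refine ⟨fun M N hMN => ?_, fun N => ?_⟩
  · ext a b
    exact hinj (funext fun i => congr_fun (congr_fun (congr_fun hMN i) a) b)
  · choose M hM using fun a b => hsurj fun i => N i a b
    exact ⟨Matrix.of M, funext fun i => by ext a b; exact congr_fun (hM a b) i⟩

lemma CompleteOrthogonalIdempotents.isStronglyClean_of_forall_quotient
    (he : CompleteOrthogonalIdempotents e) {A : Matrix ι ι R}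
    (hA : ∀ i, IsStronglyClean (A.map (Ideal.Quotient.mk (Ideal.span {1 - e i})))) :
    IsStronglyClean A := by
  let Φ := RingEquiv.ofBijective _ (he.bijective_pi_mapMatrix (ι := ι))
  simpa only [Φ.symm_apply_apply] using (IsStronglyClean.pi hA).map Φ.symm (a := Φ A)

end Gluing

theorem Matrix.isStronglyClean_of_hasGSRCFactorization {R : Type*} [CommRing R] {ι : Type*}
    [Fintype ι] [DecidableEq ι] {A : Matrix ι ι R} (hA : HasGSRCFactorization A.charpoly) :
    IsStronglyClean A := by
  obtain ⟨k, e, he, hsrc⟩ := hA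
  refine (isCompleteOrthogonalIdempotents_iff.mp he).isStronglyClean_of_forall_quotient
    fun i => isStronglyClean_of_aeval_eq_zero ?_ (hsrc i)
  rw [← charpoly_map]
  exact aeval_self_charpoly _

theorem matrixRing_stronglyClean_iff_general {R : Type*} [CommRing R] {n : ℕ} :
    (∀ A : Matrix (Fin n) (Fin n) R, IsStronglyClean A) ↔
      ∀ h : Polynomial R, h.Monic → h.natDegree = n → HasGSRCFactorization h := by
  refine ⟨fun hA h hm hn => hm.hasGSRCFactorization (by subst hn; exact hA _), fun hfac A => ?_⟩
  rcases subsingleton_or_nontrivial R with _ | _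
  · exact ⟨0, A, .zero, isUnit_of_subsingleton A, (zero_add A).symm, Subsingleton.elim _ _⟩
  · exact A.isStronglyClean_of_hasGSRCFactorization
      (hfac _ A.charpoly_monic (by rw [charpoly_natDegree_eq_dim, Fintype.card_fin]))

/-- For a commutative ring `R` and `n ≥ 2`, the matrix ring `Mₙ(R)` is strongly clean iff
every monic polynomial of degree `n` over `R` has a gSRC-factorization. -/
theorem matrixRing_stronglyClean_iff {R : Type*} [CommRing R] {n : ℕ} (hn : 2 ≤ n) :
    (∀ A : Matrix (Fin n) (Fin n) R, IsStronglyClean A) ↔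
      ∀ h : Polynomial R, h.Monic → h.natDegree = n → HasGSRCFactorization h :=
  matrixRing_stronglyClean_iff_general
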